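/- arXiv:2111.05486 — 3 statements merged into one kernel-verified Lean document; each statement's English description precedes it below -/
import Mathlib

section
/- Any finite game that is dominance solvable (iterated elimination of strictly dominated strategies leaves a single action profile a*) has a unique correlated equilibrium, namely the point distribution on a*. In particular, any correlated equilibrium assigns probability zero to every action removed in any iteration of elimination. -/
/-- Any finite game that is dominance solvable (iterated elimination of strictly
dominated strategies, possibly by mixed strategies, leaves a single action
profile a*) has a unique correlated equilibrium, namely the point distribution
on a*; in particular any correlated equilibrium assigns probability zero to
every profile using an eliminated action. -/
theorem stmt4
    {ι : Type*} [Fintype ι] [DecidableEq ι]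
    {A : ι → Type*} [∀ n, Fintype (A n)] [∀ n, DecidableEq (A n)]
    [∀ n, Nonempty (A n)]
    (u : ι → (∀ n, A n) → ℝ)
    (S : ℕ → ∀ n, Finset (A n)) (L : ℕ) (astar : ∀ n, A n)
    -- elimination sequence: starts from the full game
    (hS0 : ∀ n, S 0 n = Finset.univ)
    -- surviving sets are nested
    (hmono : ∀ l n, S (l + 1) n ⊆ S l n)
    -- every action removed at iteration l is strictly dominated by a mixed
    -- strategy supported on the surviving actions, within the restricted game
    (hdom : ∀ l, l < L → ∀ n, ∀ a ∈ S l n \ S (l + 1) n,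
      ∃ x : A n → ℝ, (∀ b, 0 ≤ x b) ∧ (∀ b, x b ≠ 0 → b ∈ S l n) ∧
        (∑ b, x b = 1) ∧
        ∀ s : ∀ m, A m, (∀ m, s m ∈ S l m) → s n = a →
          (∑ b, x b * u n (Function.update s n b)) > u n s)
    -- dominance solvable: a single profile a* survives
    (hterm : ∀ n, S L n = {astar n})
    -- π is a correlated equilibrium
    (π : (∀ n, A n) → ℝ)
    (hπ0 : ∀ s, 0 ≤ π s) (hπ1 : ∑ s, π s = 1)
    (hCE : ∀ n, ∀ a a' : A n,
      ∑ s ∈ Finset.univ.filter (fun s : ∀ m, A m => s n = a),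
        π s * (u n (Function.update s n a') - u n s) ≤ 0) :
    (π astar = 1 ∧ ∀ s, s ≠ astar → π s = 0) ∧
    (∀ l, l ≤ L → ∀ s : ∀ m, A m, (∃ n, s n ∉ S l n) → π s = 0) := by
  classical
  have key : ∀ l, l ≤ L → ∀ s : ∀ m, A m, (∃ n, s n ∉ S l n) → π s = 0 := by
    intro l
    induction l with
    | zero =>
      rintro _ s ⟨n, hn⟩
      exact absurd (by simp [hS0 n]) hn
    | succ l ih =>
      rintro hl s ⟨n, hn⟩
      by_cases h1 : s n ∈ S l n
      · obtain ⟨x, hx0, hxsupp, hx1, hxdom⟩ :=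
          hdom l (by omega) n (s n) (Finset.mem_sdiff.mpr ⟨h1, hn⟩)
        have ihl := ih (by omega)
        set F := Finset.univ.filter (fun t : ∀ m, A m => t n = s n) with hF
        have hpos : ∀ t ∈ F,
            0 ≤ π t * ((∑ b, x b * u n (Function.update t n b)) - u n t) ∧
            (π t ≠ 0 → 0 < π t * ((∑ b, x b * u n (Function.update t n b)) - u n t)) := by
          intro t htF
          have htn : t n = s n := by simpa [hF] using htF
          by_cases hπt : π t = 0
          · simp [hπt]
          · have hπpos : 0 < π t := lt_of_le_of_ne (hπ0 t) (Ne.symm hπt)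
            have htS : ∀ m, t m ∈ S l m := by
              intro m
              by_contra hm
              exact hπt (ihl t ⟨m, hm⟩)
            have hd := hxdom t htS htn
            have hp : 0 < π t * ((∑ b, x b * u n (Function.update t n b)) - u n t) :=
              mul_pos hπpos (sub_pos.mpr hd)
            exact ⟨le_of_lt hp, fun _ => hp⟩
        have step : ∀ t ∈ F, π t * ((∑ b, x b * u n (Function.update t n b)) - u n t)
            = ∑ b, x b * (π t * (u n (Function.update t n b) - u n t)) := by
          intro t _
          calc π t * ((∑ b, x b * u n (Function.update t n b)) - u n t)
              = (∑ b, π t * (x b * u n (Function.update t n b)))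
                  - (∑ b, x b) * (π t * u n t) := by
                rw [hx1, mul_sub, Finset.mul_sum]; ring
            _ = ∑ b, x b * (π t * (u n (Function.update t n b) - u n t)) := by
                rw [Finset.sum_mul, ← Finset.sum_sub_distrib]
                exact Finset.sum_congr rfl (fun b _ => by ring)
        have hsum :
            ∑ t ∈ F, π t * ((∑ b, x b * u n (Function.update t n b)) - u n t) ≤ 0 := by
          rw [Finset.sum_congr rfl step, Finset.sum_comm]
          apply Finset.sum_nonpos
          intro b _
          rw [← Finset.mul_sum]
          have hce := hCE n (s n) b
          have := mul_le_mul_of_nonneg_left hce (hx0 b)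
          simpa using this
        have hsum0 : ∑ t ∈ F, π t * ((∑ b, x b * u n (Function.update t n b)) - u n t) = 0 :=
          le_antisymm hsum (Finset.sum_nonneg (fun t ht => (hpos t ht).1))
        have hall := (Finset.sum_eq_zero_iff_of_nonneg (fun t ht => (hpos t ht).1)).mp hsum0
        have hsF : s ∈ F := by simp [hF]
        by_contra hπs
        exact absurd (hall s hsF) (ne_of_gt ((hpos s hsF).2 hπs))
      · exact ih (by omega) s ⟨n, h1⟩
  have hzero : ∀ s, s ≠ astar → π s = 0 := by
    intro s hs
    have hex : ∃ n, s n ≠ astar n := by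
      by_contra h
      push_neg at h
      exact hs (funext h)
    obtain ⟨n, hn⟩ := hex
    exact key L le_rfl s ⟨n, by simp [hterm n, hn]⟩
  have h1 : π astar = 1 := by
    calc π astar = ∑ s, π s :=
          (Finset.sum_eq_single astar (fun b _ hb => hzero b hb) (by simp)).symm
      _ = 1 := hπ1
  exact ⟨⟨h1, hzero⟩, key⟩
end

section
/- Consider the DIR(K,c) game with c > 1 and ρ = max{K,c}. Fix k ∈ {2,...,2K-1} and ε > 0 with 1/ε ∈ (ρ·Σ_{i=1}^{k-1} c^{i-1}, ρ·Σ_{i=1}^{k} c^{i-1}]. Then the nonnegative weights δ_i = ρ·ε·c^{i-1} for i < k, δ_k = 1 - ρ·ε·Σ_{i=1}^{k-1} c^{i-1}, δ_i = 0 for i > k sum to 1 and satisfy δ_1 ≤ ερ, δ_{2j-2}(-c-j) + δ_{2j-1} ≤ ερ for all valid j, and δ_{2j-1}(-c-j) + δ_{2j} ≤ ερ for all valid j. -/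
/-- The explicit weights δ on the staircase support of DIR(K,c) form a feasible
solution to the ε-correlated-equilibrium linear system (System (3)). -/
theorem stmt6 (K : ℕ) (c ε : ℝ) (hK : 2 ≤ K) (hc : 1 < c) (hε : 0 < ε)
    (k : ℕ) (hk2 : 2 ≤ k) (hk : k ≤ 2 * K - 1)
    (ρ : ℝ) (hρ : ρ = max (K : ℝ) c)
    (hlo : ρ * ∑ i ∈ Finset.Icc 1 (k - 1), c ^ (i - 1) < 1 / ε)
    (hhi : 1 / ε ≤ ρ * ∑ i ∈ Finset.Icc 1 k, c ^ (i - 1))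
    (δ : ℕ → ℝ)
    (hδ : ∀ i, δ i =
      if i < k then ρ * ε * c ^ (i - 1)
      else if i = k then 1 - ρ * ε * ∑ j ∈ Finset.Icc 1 (k - 1), c ^ (j - 1)
      else 0) :
    (∀ i ∈ Finset.Icc 1 (2 * K - 1), 0 ≤ δ i) ∧
    (∑ i ∈ Finset.Icc 1 (2 * K - 1), δ i = 1) ∧
    δ 1 ≤ ε * ρ ∧
    (∀ j ∈ Finset.Icc 2 (K - 1),
      δ (2 * j - 2) * (-c - (j : ℝ)) + δ (2 * j - 1) ≤ ε * ρ) ∧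
    (∀ j ∈ Finset.Icc 1 (K - 1),
      δ (2 * j - 1) * (-c - (j : ℝ)) + δ (2 * j) ≤ ε * ρ) := by
  have hc0 : (0:ℝ) < c := lt_trans one_pos hc
  have hρc : c ≤ ρ := hρ ▸ le_max_right _ _
  have hρ0 : (0:ℝ) < ρ := lt_of_lt_of_le hc0 hρc
  set S : ℕ → ℝ := fun m => ∑ i ∈ Finset.Icc 1 m, c ^ (i - 1) with hSdef
  have hstep : ∀ b : ℕ, S (b+1) = S b + c ^ b := by
    intro b
    simp only [hSdef]
    rw [Finset.sum_Icc_succ_top (by omega)]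
    simp
  have h1 : ρ * ε * S (k-1) < 1 := by
    have h := mul_lt_mul_of_pos_right hlo hε
    rw [div_mul_cancel₀ 1 (ne_of_gt hε)] at h
    nlinarith
  have h2 : 1 ≤ ρ * ε * S k := by
    have h := mul_le_mul_of_nonneg_right hhi hε.le
    rw [div_mul_cancel₀ 1 (ne_of_gt hε)] at h
    nlinarith
  have hδk : δ k = 1 - ρ * ε * S (k-1) := by
    rw [hδ k, if_neg (lt_irrefl k), if_pos rfl]
  have hεnum : 0 < ε * ρ := by positivity
  -- key inequality lemma
  have key : ∀ a : ℕ, 1 ≤ a → ∀ t : ℝ, 1 ≤ t →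
      δ a * (-c - t) + δ (a+1) ≤ ε * ρ := by
    intro a ha t ht
    obtain ⟨b, rfl⟩ : ∃ b, a = b + 1 := ⟨a - 1, by omega⟩
    have hcb : (0:ℝ) < c ^ b := by positivity
    rcases lt_trichotomy (b + 2) k with h | h | h
    · -- a+1 < k
      rw [hδ (b+1), if_pos (by omega), hδ (b+2), if_pos h]
      simp only [Nat.add_sub_cancel]
      have : (b + 2 - 1) = b + 1 := by omega
      rw [this, pow_succ]
      nlinarith [mul_pos (mul_pos hρ0 hε) hcb, ht, hεnum]
    · -- a+1 = k
      rw [hδ (b+1), if_pos (by omega), show b+1+1 = k by omega, hδk]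
      simp only [Nat.add_sub_cancel]
      have hkm : k - 1 = b + 1 := by omega
      have hS : S k = S (k-1) + c ^ b * c := by
        rw [hkm, show k = (b+1)+1 by omega, hstep (b+1), pow_succ]
      nlinarith [mul_pos (mul_pos hρ0 hε) hcb, ht, hεnum, h2, hS]
    · -- a+1 > k, so a ≥ k
      rcases eq_or_lt_of_le (show k ≤ b + 1 by omega) with he | hl
      · rw [hδ (b+2), if_neg (by omega), if_neg (by omega), ← he, hδk]
        nlinarith
      · rw [hδ (b+1), if_neg (by omega), if_neg (by omega),
            hδ (b+2), if_neg (by omega), if_neg (by omega)]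
        nlinarith
  refine ⟨?_, ?_, ?_, ?_, ?_⟩
  · intro i _
    rw [hδ i]
    split_ifs
    · positivity
    · nlinarith
    · exact le_refl 0
  · have hsub : Finset.Icc 1 k ⊆ Finset.Icc 1 (2*K-1) :=
      Finset.Icc_subset_Icc_right hk
    rw [← Finset.sum_subset hsub (by
      intro x hx hnx
      rw [hδ x]
      simp only [Finset.mem_Icc] at hx hnx
      rw [if_neg (by omega), if_neg (by omega)])]
    obtain ⟨m, hm⟩ : ∃ m, k = m + 1 := ⟨k-1, by omega⟩
    subst hm
    rw [Finset.sum_Icc_succ_top (by omega)]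
    rw [Finset.sum_congr rfl (fun i hi => by
      rw [hδ i, if_pos (by simp [Finset.mem_Icc] at hi; omega)])]
    rw [← Finset.mul_sum, hδk]
    simp only [Nat.add_sub_cancel]
    ring
  · rw [hδ 1, if_pos (by omega)]
    simp
    nlinarith
  · intro j hj
    simp only [Finset.mem_Icc] at hj
    have h1j : 2 * j - 1 = (2 * j - 2) + 1 := by omega
    rw [h1j]
    exact key (2*j-2) (by omega) j (by exact_mod_cast Nat.one_le_cast.mpr (by omega))
  · intro j hj
    simp only [Finset.mem_Icc] at hj
    have h1j : 2 * j = (2 * j - 1) + 1 := by omega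
    rw [h1j]
    exact key (2*j-1) (by omega) j (by exact_mod_cast Nat.one_le_cast.mpr (by omega))
end

section
/- Under the hypothesis that Σ_{j=1}^n p_{B,j}(t) ≥ 1/(K-n+1) for a round t, and assuming K/c ≤ 1/(3K), the DIR(K,c) expected payoff of any row action i ≥ n+2 against the column player's mixed strategy p_B(t) satisfies ũ_{A,i}(t) ≤ -(1/(K-n+1)) + ((K-n)/(K-n+1))·(1/(3K)) < -2/(3K). -/
/-- DIR row payoff normalized by ρ = c. -/
noncomputable def u1 (c : ℝ) (i j : ℕ) : ℝ := if i ≤ j + 1 then (i : ℝ) / c else -1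

/-!
Against columns `j ≤ n` every action `i ≥ n + 2` loses `1`, and against any other column it earns
at most `K / c ≤ 1 / (3K)`. With mass `S ≥ 1 / (K - n + 1)` on the losing columns the expected payoff
is at most `-S + (1 - S) / (3K)`, which decreases in `S`. The strict bound holds because
`1 / (K - n + 1) ≥ 1 / K = 3 · 1 / (3K)`.
-/

open Finset

lemma u1_eq_neg_one_of_add_one_lt {c : ℝ} {i j : ℕ} (hji : j + 1 < i) : u1 c i j = -1 :=
  if_neg (by omega)

lemma u1_le {c b : ℝ} {i K : ℕ} (hc : 0 ≤ c) (hiK : i ≤ K) (hKc : (K : ℝ) / c ≤ b) (hb : -1 ≤ b)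
    (j : ℕ) : u1 c i j ≤ b := by
  unfold u1
  split_ifs
  · exact le_trans (by gcongr) hKc
  · exact hb

lemma sum_Icc_one_eq_add_sum_Ioc {M : Type*} [AddCommMonoid M] (f : ℕ → M) {n K : ℕ}
    (hnK : n ≤ K) : ∑ j ∈ Icc 1 K, f j = ∑ j ∈ Icc 1 n, f j + ∑ j ∈ Ioc n K, f j := by
  have h := sum_Ioc_consecutive f (Nat.zero_le n) hnK
  rwa [← Icc_add_one_left_eq_Ioc 0 n, ← Icc_add_one_left_eq_Ioc 0 K, eq_comm] at h

lemma sum_mul_add_sum_mul_le {ι : Type*} {s t : Finset ι} {p f : ι → ℝ} {b : ℝ}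
    (hp : ∀ j ∈ t, 0 ≤ p j) (hs : ∀ j ∈ s, f j = -1) (ht : ∀ j ∈ t, f j ≤ b) :
    ∑ j ∈ s, p j * f j + ∑ j ∈ t, p j * f j ≤ -∑ j ∈ s, p j + (∑ j ∈ t, p j) * b := by
  have hs' : ∑ j ∈ s, p j * f j = -∑ j ∈ s, p j := by
    rw [← sum_neg_distrib]
    exact sum_congr rfl fun j hj => by rw [hs j hj, mul_neg_one]
  have ht' : ∑ j ∈ t, p j * f j ≤ (∑ j ∈ t, p j) * b := by
    rw [sum_mul]
    exact sum_le_sum fun j hj => mul_le_mul_of_nonneg_left (ht j hj) (hp j hj)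
  linarith

lemma sum_mul_u1_le {c b : ℝ} {K n i : ℕ} (hc : 0 ≤ c) (hKc : (K : ℝ) / c ≤ b) (hb : -1 ≤ b)
    (hni : n + 2 ≤ i) (hiK : i ≤ K) {p : ℕ → ℝ} (hp0 : ∀ j ∈ Icc 1 K, 0 ≤ p j)
    (hp1 : ∑ j ∈ Icc 1 K, p j = 1) :
    ∑ j ∈ Icc 1 K, p j * u1 c i j ≤ -∑ j ∈ Icc 1 n, p j + (1 - ∑ j ∈ Icc 1 n, p j) * b := by
  have hnK : n ≤ K := by omega
  have hrest : ∑ j ∈ Ioc n K, p j = 1 - ∑ j ∈ Icc 1 n, p j := by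
    rw [← hp1, sum_Icc_one_eq_add_sum_Ioc p hnK, add_sub_cancel_left]
  rw [sum_Icc_one_eq_add_sum_Ioc _ hnK, ← hrest]
  exact sum_mul_add_sum_mul_le
    (fun j hj => hp0 j (by simp only [mem_Ioc, mem_Icc] at hj ⊢; omega))
    (fun j hj => u1_eq_neg_one_of_add_one_lt (by simp only [mem_Icc] at hj; omega))
    (fun j _ => u1_le hc hiK hKc hb j)

lemma neg_add_one_sub_mul_le_of_le {a S b : ℝ} (hb : -1 ≤ b) (haS : a ≤ S) :
    -S + (1 - S) * b ≤ -a + (1 - a) * b := by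
  nlinarith

lemma neg_add_one_sub_mul_lt {a b : ℝ} (ha : 0 < a) (hb : 0 < b) (hab : 3 * b ≤ a) :
    -a + (1 - a) * b < -(2 * b) := by
  nlinarith [mul_pos ha hb]

theorem stmt11_general (K : ℕ) (c : ℝ) (hc : 0 < c)
    (hKc : (K : ℝ) / c ≤ 1 / (3 * (K : ℝ)))
    (n : ℕ) (hn1 : 1 ≤ n) (hn : n ≤ K - 2)
    (pB : ℕ → ℝ)
    (hpB0 : ∀ j ∈ Finset.Icc 1 K, 0 ≤ pB j)
    (hpB1 : ∑ j ∈ Finset.Icc 1 K, pB j = 1)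
    (hmass : (1 : ℝ) / ((K : ℝ) - n + 1) ≤ ∑ j ∈ Finset.Icc 1 n, pB j)
    (i : ℕ) (hi : n + 2 ≤ i) (hiK : i ≤ K) :
    (∑ j ∈ Finset.Icc 1 K, pB j * u1 c i j)
      ≤ -(1 / ((K : ℝ) - n + 1)) + (((K : ℝ) - n) / ((K : ℝ) - n + 1)) * (1 / (3 * (K : ℝ)))
    ∧ -(1 / ((K : ℝ) - n + 1)) + (((K : ℝ) - n) / ((K : ℝ) - n + 1)) * (1 / (3 * (K : ℝ)))
      < -2 / (3 * (K : ℝ)) := by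
  have hnK : (n : ℝ) + 2 ≤ K := by exact_mod_cast (by omega : n + 2 ≤ K)
  have hn1' : (1 : ℝ) ≤ n := by exact_mod_cast hn1
  have hden : (0 : ℝ) < K - n + 1 := by linarith
  have ha : 0 < 1 / ((K : ℝ) - n + 1) := by positivity
  have hb : 0 < 1 / (3 * (K : ℝ)) := one_div_pos.mpr (by linarith)
  have h3b : 3 * (1 / (3 * (K : ℝ))) ≤ 1 / ((K : ℝ) - n + 1) := by
    rw [show 3 * (1 / (3 * (K : ℝ))) = 1 / (K : ℝ) by field_simp]
    exact one_div_le_one_div_of_le hden (by linarith)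
  rw [show ((K : ℝ) - n) / ((K : ℝ) - n + 1) = 1 - 1 / ((K : ℝ) - n + 1) by field_simp; ring,
    show -2 / (3 * (K : ℝ)) = -(2 * (1 / (3 * (K : ℝ)))) by ring]
  exact ⟨(sum_mul_u1_le hc.le hKc (by linarith) hi hiK hpB0 hpB1).trans
      (neg_add_one_sub_mul_le_of_le (by linarith) hmass),
    neg_add_one_sub_mul_lt ha hb h3b⟩

/-- If player B's mixed strategy puts mass at least 1/(K-n+1) on actions
{1,…,n}, and K/c ≤ 1/(3K), then the expected DIR payoff of any row action
i ≥ n+2 is at most -(1/(K-n+1)) + ((K-n)/(K-n+1))·(1/(3K)) < -2/(3K). -/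
theorem stmt11 (K : ℕ) (c : ℝ) (hK : 3 ≤ K) (hc : 0 < c)
    (hKc : (K : ℝ) / c ≤ 1 / (3 * (K : ℝ)))
    (n : ℕ) (hn1 : 1 ≤ n) (hn : n ≤ K - 2)
    (pB : ℕ → ℝ)
    (hpB0 : ∀ j ∈ Finset.Icc 1 K, 0 ≤ pB j)
    (hpB1 : ∑ j ∈ Finset.Icc 1 K, pB j = 1)
    (hmass : (1 : ℝ) / ((K : ℝ) - n + 1) ≤ ∑ j ∈ Finset.Icc 1 n, pB j)
    (i : ℕ) (hi : n + 2 ≤ i) (hiK : i ≤ K) :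
    (∑ j ∈ Finset.Icc 1 K, pB j * u1 c i j)
      ≤ -(1 / ((K : ℝ) - n + 1)) + (((K : ℝ) - n) / ((K : ℝ) - n + 1)) * (1 / (3 * (K : ℝ)))
    ∧ -(1 / ((K : ℝ) - n + 1)) + (((K : ℝ) - n) / ((K : ℝ) - n + 1)) * (1 / (3 * (K : ℝ)))
      < -2 / (3 * (K : ℝ)) :=
  stmt11_general K c hc hKc n hn1 hn pB hpB0 hpB1 hmass i hi hiK
end
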